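/- arXiv:2403.15656 — 2 statements merged into one kernel-verified Lean document; each statement's English description precedes it below -/
import Mathlib

section
/- Let λmax ≥ λmin > 0 be real numbers. For positive reals σmin ≤ σmax, define the condition-number bound κ̄(σmin, σmax) = max( (λmax + √(λmax² + 4σmax²)) / (√(λmax² + 4σmin²) − λmax), (λmax + √(λmax² + 4σmax²)) / (2λmin) ). Then σ* := √(λmax·λmin + λmin²) is a global minimizer: for all real σmin, σmax with 0 < σmin ≤ σmax, one has κ̄(σ*, σ*) ≤ κ̄(σmin, σmax). -/
/-- `σ* = √(λmax·λmin + λmin²)` globally minimizes the KKT condition-number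
bound `κ̄(σmin, σmax)` over all `0 < σmin ≤ σmax`. -/
theorem qr_preconditioner_optimal_singular_values
    (lmax lmin : ℝ) (hle : lmin ≤ lmax) (hpos : 0 < lmin)
    (κ : ℝ → ℝ → ℝ)
    (hκ : ∀ smin smax : ℝ,
      κ smin smax =
        max ((lmax + Real.sqrt (lmax ^ 2 + 4 * smax ^ 2)) /
              (Real.sqrt (lmax ^ 2 + 4 * smin ^ 2) - lmax))
            ((lmax + Real.sqrt (lmax ^ 2 + 4 * smax ^ 2)) / (2 * lmin))) :
    ∀ smin smax : ℝ, 0 < smin → smin ≤ smax →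
      κ (Real.sqrt (lmax * lmin + lmin ^ 2)) (Real.sqrt (lmax * lmin + lmin ^ 2))
        ≤ κ smin smax := by
  intro smin smax hsmin hsle
  have hlmax : 0 < lmax := lt_of_lt_of_le hpos hle
  set s := Real.sqrt (lmax * lmin + lmin ^ 2) with hs
  have harg : 0 ≤ lmax * lmin + lmin ^ 2 := by positivity
  have hs2 : s ^ 2 = lmax * lmin + lmin ^ 2 := Real.sq_sqrt harg
  have hroot : Real.sqrt (lmax ^ 2 + 4 * s ^ 2) = lmax + 2 * lmin := by
    rw [show lmax ^ 2 + 4 * s ^ 2 = (lmax + 2 * lmin) ^ 2 by rw [hs2]; ring,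
      Real.sqrt_sq (by linarith)]
  have hκs : κ s s = (lmax + lmin) / lmin := by
    rw [hκ, hroot]
    have h1 : (lmax + (lmax + 2 * lmin)) / (lmax + 2 * lmin - lmax)
        = (lmax + lmin) / lmin := by
      rw [show lmax + 2 * lmin - lmax = 2 * lmin by ring]
      rw [div_eq_div_iff (by positivity) hpos.ne']; ring
    have h2 : (lmax + (lmax + 2 * lmin)) / (2 * lmin) = (lmax + lmin) / lmin := by
      rw [div_eq_div_iff (by positivity) hpos.ne']; ring
    rw [h1, h2, max_self]
  rw [hκs, hκ]
  set B := Real.sqrt (lmax ^ 2 + 4 * smin ^ 2) with hB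
  set B' := Real.sqrt (lmax ^ 2 + 4 * smax ^ 2) with hB'
  have hBgt : lmax < B := by
    have : Real.sqrt (lmax ^ 2) < B := by
      apply Real.sqrt_lt_sqrt (by positivity)
      nlinarith
    rwa [Real.sqrt_sq hlmax.le] at this
  have hBB' : B ≤ B' := by
    apply Real.sqrt_le_sqrt
    nlinarith [pow_le_pow_left₀ hsmin.le hsle 2]
  by_cases hc : B ≤ lmax + 2 * lmin
  · refine le_max_of_le_left ?_
    have h1 : (lmax + lmin) / lmin ≤ (lmax + B) / (B - lmax) := by
      rw [div_le_div_iff₀ hpos (by linarith)]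
      nlinarith
    refine h1.trans ?_
    gcongr
  · refine le_max_of_le_right ?_
    push_neg at hc
    have hB'big : lmax + 2 * lmin ≤ B' := le_trans hc.le hBB'
    rw [div_le_div_iff₀ hpos (by positivity)]
    nlinarith
end

section
/- Let λmax ≥ λmin > 0 and σmax ≥ σmin > 0 be real numbers, and define the intervals I⁻ = [ (λmin − √(λmin² + 4σmax²))/2 , (λmax − √(λmax² + 4σmin²))/2 ] and I⁺ = [ λmin , (λmax + √(λmax² + 4σmax²))/2 ]. Then every element of I⁻ ∪ I⁺ is nonzero, and for all x, y ∈ I⁻ ∪ I⁺, |x| / |y| ≤ max( (λmax + √(λmax² + 4σmax²)) / (√(λmax² + 4σmin²) − λmax), (λmax + √(λmax² + 4σmax²)) / (2λmin) ). -/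
/-- every element of `I⁻ ∪ I⁺` is nonzero, and the ratio `|x|/|y|` of any two
elements is bounded by the condition-number bound. -/
theorem kkt_condition_number_bound
    (lmax lmin σmax σmin : ℝ)
    (hle : lmin ≤ lmax) (hpos : 0 < lmin) (hσle : σmin ≤ σmax) (hσpos : 0 < σmin) :
    (∀ x ∈ Set.Icc ((lmin - Real.sqrt (lmin ^ 2 + 4 * σmax ^ 2)) / 2)
          ((lmax - Real.sqrt (lmax ^ 2 + 4 * σmin ^ 2)) / 2) ∪
        Set.Icc lmin ((lmax + Real.sqrt (lmax ^ 2 + 4 * σmax ^ 2)) / 2), x ≠ 0)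
    ∧
    (∀ x ∈ Set.Icc ((lmin - Real.sqrt (lmin ^ 2 + 4 * σmax ^ 2)) / 2)
          ((lmax - Real.sqrt (lmax ^ 2 + 4 * σmin ^ 2)) / 2) ∪
        Set.Icc lmin ((lmax + Real.sqrt (lmax ^ 2 + 4 * σmax ^ 2)) / 2),
      ∀ y ∈ Set.Icc ((lmin - Real.sqrt (lmin ^ 2 + 4 * σmax ^ 2)) / 2)
          ((lmax - Real.sqrt (lmax ^ 2 + 4 * σmin ^ 2)) / 2) ∪
        Set.Icc lmin ((lmax + Real.sqrt (lmax ^ 2 + 4 * σmax ^ 2)) / 2),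
      |x| / |y| ≤
        max ((lmax + Real.sqrt (lmax ^ 2 + 4 * σmax ^ 2)) /
              (Real.sqrt (lmax ^ 2 + 4 * σmin ^ 2) - lmax))
            ((lmax + Real.sqrt (lmax ^ 2 + 4 * σmax ^ 2)) / (2 * lmin))) := by
  set A := Real.sqrt (lmin ^ 2 + 4 * σmax ^ 2) with hAdef
  set B := Real.sqrt (lmax ^ 2 + 4 * σmin ^ 2) with hBdef
  set C := Real.sqrt (lmax ^ 2 + 4 * σmax ^ 2) with hCdef
  have hA0 : 0 ≤ A := Real.sqrt_nonneg _
  have hB0 : 0 ≤ B := Real.sqrt_nonneg _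
  have hC0 : 0 ≤ C := Real.sqrt_nonneg _
  have hA2 : A ^ 2 = lmin ^ 2 + 4 * σmax ^ 2 := Real.sq_sqrt (by positivity)
  have hB2 : B ^ 2 = lmax ^ 2 + 4 * σmin ^ 2 := Real.sq_sqrt (by positivity)
  have hC2 : C ^ 2 = lmax ^ 2 + 4 * σmax ^ 2 := Real.sq_sqrt (by positivity)
  have hBgt : lmax < B := by nlinarith
  have hCgt : lmax < C := by nlinarith
  have hAleC : A ≤ C := by
    apply Real.sqrt_le_sqrt; nlinarith
  -- bounds for elements of the union
  set M := (lmax + C) / 2 with hMdef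
  set m := min ((B - lmax) / 2) lmin with hmdef
  have hmpos : 0 < m := lt_min (by linarith) hpos
  have key : ∀ z ∈ Set.Icc ((lmin - A) / 2) ((lmax - B) / 2) ∪ Set.Icc lmin M,
      z ≠ 0 ∧ |z| ≤ M ∧ m ≤ |z| := by
    rintro z (⟨h1, h2⟩ | ⟨h1, h2⟩)
    · have hzneg : z < 0 := by
        have : (lmax - B) / 2 < 0 := by linarith
        linarith
      have habs : |z| = -z := abs_of_neg hzneg
      refine ⟨ne_of_lt hzneg, ?_, ?_⟩
      · rw [habs]; have : -z ≤ (A - lmin) / 2 := by linarith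
        have : (A - lmin) / 2 ≤ M := by rw [hMdef]; linarith
        linarith
      · rw [habs]
        calc m ≤ (B - lmax) / 2 := min_le_left _ _
          _ ≤ -z := by linarith
    · have hzpos : 0 < z := lt_of_lt_of_le hpos h1
      have habs : |z| = z := abs_of_pos hzpos
      exact ⟨ne_of_gt hzpos, by rw [habs]; exact h2, by
        rw [habs]; exact le_trans (min_le_right _ _) h1⟩
  refine ⟨fun x hx => (key x hx).1, fun x hx y hy => ?_⟩
  obtain ⟨-, hxM, -⟩ := key x hx
  obtain ⟨-, -, hym⟩ := key y hy
  have hMpos : 0 ≤ M := le_trans (abs_nonneg x) hxM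
  have hstep : |x| / |y| ≤ M / m := div_le_div₀ hMpos hxM hmpos hym
  refine le_trans hstep ?_
  rcases min_cases ((B - lmax) / 2) lmin with ⟨heq, -⟩ | ⟨heq, -⟩
  · refine le_trans ?_ (le_max_left _ _)
    rw [hmdef, heq, hMdef]
    rw [div_le_div_iff₀ (by linarith) (by linarith)]
    ring_nf
    nlinarith
  · refine le_trans ?_ (le_max_right _ _)
    rw [hmdef, heq, hMdef]
    rw [div_le_div_iff₀ (by linarith) (by linarith)]
    ring_nf
    nlinarith
end
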